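/- arXiv:1710.03395 — 10 statements merged into one kernel-verified Lean document; each statement's English description precedes it below -/
import Mathlib

section
/- Let D be a dictionary, let s ∈ Pref(D) with s ≠ ε, let s' ∈ Pref(D), and let (x_i) be the suffix-link chain of s (so x_0 = s). Then s' = flink_D(s) if and only if there exists an integer k ≥ 1 such that x_k is defined, x_k ≡_D s', and for every i with 1 ≤ i < k no string y ∈ Substr(D) with y ≡_D x_i belongs to Pref(D). -/
variable {α : Type*}

/-- The set of substrings (contiguous factors, including ε) of patterns in `D`. -/
def Substr (D : Finset (List α)) : Set (List α) := {x | ∃ p ∈ D, x <:+: p}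

/-- The set of prefixes (including ε) of patterns in `D`. -/
def Pref (D : Finset (List α)) : Set (List α) := {x | ∃ p ∈ D, x <+: p}

/-- `ePos D x` : pattern/end-position pairs (1-based end position `j`) at which `x`
occurs in a pattern of `D`, i.e. `x = q[j-|x|+1..j]`. -/
def ePos (D : Finset (List α)) (x : List α) : Set (List α × ℕ) :=
  {qj | qj.1 ∈ D ∧ x.length ≤ qj.2 ∧ qj.2 ≤ qj.1.length ∧
        x = (qj.1.take qj.2).drop (qj.2 - x.length)}

/-- `x ≡_D y` iff `ePos(x,D) = ePos(y,D)`. -/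
def eqv (D : Finset (List α)) (x y : List α) : Prop := ePos D x = ePos D y

/-- Suffix link: the longest suffix `y` of `x` with `y ≢_D x` (`x.tails` lists the
suffixes of `x` in decreasing length order, so `headI` of the filtered list is the
longest suffix that is not `≡_D`-equivalent to `x`). -/
noncomputable def slink (D : Finset (List α)) (x : List α) : List α :=
  letI := Classical.propDecidable
  (x.tails.filter (fun y => decide (¬ eqv D x y))).headI

/-- Failure link: the longest proper suffix of `s` that belongs to `Pref D`
(`s.tails.drop 1` lists the proper suffixes of `s` in decreasing length order). -/
noncomputable def flink (D : Finset (List α)) (s : List α) : List α :=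
  letI := Classical.propDecidable
  ((s.tails.drop 1).filter (fun y => decide (y ∈ Pref D))).headI

/-! ### Auxiliary lemmas -/

/-- A suffix occurs at every end position of the bigger string. -/
lemma ePos_mono {D : Finset (List α)} {u v : List α} (h : u <:+ v) :
    ePos D v ⊆ ePos D u := by
  obtain ⟨w, rfl⟩ := h
  rintro ⟨q, j⟩ ⟨hq, hlen, hj, hv⟩
  dsimp only at hq hlen hj hv ⊢
  have hL : (w ++ u).length = w.length + u.length := List.length_append
  refine ⟨hq, by omega, hj, ?_⟩
  have h1 : u = (w ++ u).drop w.length := by simp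
  conv_lhs => rw [h1]
  rw [hv, List.drop_drop]
  congr 1
  omega

/-- Two strings sharing an end position are suffix-comparable. -/
lemma suffix_of_mem_ePos {D : Finset (List α)} {x y : List α} {q : List α} {j : ℕ}
    (hx : (q, j) ∈ ePos D x) (hy : (q, j) ∈ ePos D y) (hle : x.length ≤ y.length) :
    x <:+ y := by
  obtain ⟨-, hxl, -, hxe⟩ := hx
  obtain ⟨-, hyl, -, hye⟩ := hy
  dsimp only at hxl hyl hxe hye
  have key : x = y.drop (y.length - x.length) := by
    obtain ⟨d, hd⟩ : ∃ d, y.length - x.length = d := ⟨_, rfl⟩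
    rw [hd, hye, List.drop_drop]
    rw [show j - y.length + d = j - x.length by omega, ← hxe]
  rw [key]
  exact List.drop_suffix _ _

/-- A prefix of a pattern occurs ending at position equal to its length. -/
lemma mem_ePos_of_pref {D : Finset (List α)} {s p : List α} (hp : p ∈ D) (hsp : s <+: p) :
    (p, s.length) ∈ ePos D s := by
  refine ⟨hp, le_rfl, hsp.length_le, ?_⟩
  dsimp only
  rw [Nat.sub_self, List.drop_zero]
  exact List.prefix_iff_eq_take.mp hsp

/-- Two equivalent elements of `Pref D` are equal. -/
lemma eq_of_eqv_pref {D : Finset (List α)} {u v : List α}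
    (hu : u ∈ Pref D) (hv : v ∈ Pref D) (h : eqv D u v) : u = v := by
  obtain ⟨p, hp, hup⟩ := hu
  obtain ⟨q, hq, hvq⟩ := hv
  have h' : ePos D u = ePos D v := h
  have h1 : (p, u.length) ∈ ePos D v := by rw [← h']; exact mem_ePos_of_pref hp hup
  have h2 : (q, v.length) ∈ ePos D u := by rw [h']; exact mem_ePos_of_pref hq hvq
  have hl1 : v.length ≤ u.length := h1.2.1
  have hl2 : u.length ≤ v.length := h2.2.1
  exact (suffix_of_mem_ePos h2 (mem_ePos_of_pref hq hvq) hl2).eq_of_length (le_antisymm hl2 hl1)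

lemma not_eqv_nil {D : Finset (List α)} {p₀ : List α} (hp₀ : p₀ ∈ D) {x : List α}
    (hx : x ≠ []) : ¬ eqv D x [] := by
  intro h
  have h' : ePos D x = ePos D ([] : List α) := h
  have hmem : (p₀, 0) ∈ ePos D ([] : List α) := ⟨hp₀, le_rfl, Nat.zero_le _, by simp⟩
  have hm : (p₀, 0) ∈ ePos D x := by rw [h']; exact hmem
  have := hm.2.1
  simp only [Nat.le_zero] at this
  exact hx (List.length_eq_zero_iff.mp this)

/-- The head of the filtered tails list is the longest suffix satisfying `p`. -/
lemma headI_filter_tails (p : List α → Bool) (hp : p [] = true) (x : List α) :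
    (x.tails.filter p).headI <:+ x ∧ p ((x.tails.filter p).headI) = true ∧
      ∀ y, y <:+ x → p y = true → y <:+ (x.tails.filter p).headI := by
  induction x with
  | nil =>
    simp [hp]
  | cons a l ih =>
    rw [List.tails_cons]
    by_cases h : p (a :: l) = true
    · rw [List.filter_cons_of_pos h]
      exact ⟨List.suffix_refl _, h, fun y hy _ => hy⟩
    · rw [List.filter_cons_of_neg h]
      obtain ⟨h1, h2, h3⟩ := ih
      refine ⟨h1.trans ((List.tail_suffix (a :: l))), h2, ?_⟩
      intro y hy hpy
      rcases List.suffix_cons_iff.mp hy with rfl | hy'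
      · exact absurd hpy h
      · exact h3 y hy' hpy

/-- Specification of `slink` for nonempty strings. -/
lemma slink_spec {D : Finset (List α)} {p₀ : List α} (hp₀ : p₀ ∈ D) {x : List α}
    (hx : x ≠ []) :
    slink D x <:+ x ∧ ¬ eqv D x (slink D x) ∧
      ∀ y, y <:+ x → ¬ eqv D x y → y <:+ slink D x := by
  classical
  have hnil : (fun y => decide (¬ eqv D x y)) [] = true := by
    simp only [decide_eq_true_iff]
    exact not_eqv_nil hp₀ hx
  obtain ⟨h1, h2, h3⟩ := headI_filter_tails (fun y => decide (¬ eqv D x y)) hnil x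
  refine ⟨?_, ?_, ?_⟩
  · rw [slink]
    convert h1 using 3
    funext z; exact decide_eq_decide.mpr Iff.rfl
  · rw [slink]
    simp only [decide_eq_true_iff] at h2
    convert h2 using 4
    funext z; exact decide_eq_decide.mpr Iff.rfl
  · intro y hy hne
    rw [slink]
    have := h3 y hy (by simp only [decide_eq_true_iff]; exact hne)
    convert this using 3
    funext z; exact decide_eq_decide.mpr Iff.rfl

lemma slink_nil (D : Finset (List α)) : slink D ([] : List α) = [] := by
  have h0 : ([] : List α).tails = [[]] := rfl
  rw [slink, h0, List.filter_cons]
  split <;> rfl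

lemma slink_suffix {D : Finset (List α)} {p₀ : List α} (hp₀ : p₀ ∈ D) (x : List α) :
    slink D x <:+ x := by
  rcases eq_or_ne x [] with rfl | hx
  · rw [slink_nil]
  · exact (slink_spec hp₀ hx).1

lemma slink_iterate_suffix {D : Finset (List α)} {p₀ : List α} (hp₀ : p₀ ∈ D) (x : List α)
    (n : ℕ) : (slink D)^[n] x <:+ x := by
  induction n with
  | zero => exact List.suffix_refl x
  | succ n ih =>
    rw [Function.iterate_succ_apply']
    exact (slink_suffix hp₀ _).trans ih

/-- The chain lemma. -/
lemma chain_lemma {D : Finset (List α)} {p₀ : List α} (hp₀ : p₀ ∈ D) :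
    ∀ n (s : List α), s.length ≤ n → ∀ y, y <:+ s →
      ∃ k, eqv D ((slink D)^[k] s) y ∧ (∀ j ≤ k, y <:+ (slink D)^[j] s) ∧
        (∀ j < k, ¬ eqv D ((slink D)^[j] s) y) := by
  intro n
  induction n with
  | zero =>
    intro s hlen y hy
    have hs : s = [] := List.length_eq_zero_iff.mp (Nat.le_zero.mp hlen)
    subst hs
    have hy0 : y = [] := List.suffix_nil.mp hy
    subst hy0
    refine ⟨0, rfl, ?_, fun j hj => absurd hj (Nat.not_lt_zero j)⟩
    intro j hj
    have : j = 0 := by omega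
    subst this
    exact List.suffix_refl []
  | succ n ih =>
    intro s hlen y hy
    by_cases heq : eqv D s y
    · refine ⟨0, heq, ?_, fun j hj => absurd hj (Nat.not_lt_zero j)⟩
      intro j hj
      have : j = 0 := by omega
      subst this
      exact hy
    · have hsne : s ≠ [] := by
        rintro rfl
        have hy0 : y = [] := List.suffix_nil.mp hy
        subst hy0
        exact heq rfl
      obtain ⟨hsuf, hneq, hmax⟩ := slink_spec hp₀ hsne
      have hysl : y <:+ slink D s := hmax y hy heq
      have hne' : slink D s ≠ s := by
        intro h
        apply hneq
        show ePos D s = ePos D (slink D s)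
        rw [h]
      have hlt : (slink D s).length < s.length :=
        lt_of_le_of_ne hsuf.length_le (fun hl => hne' (hsuf.eq_of_length hl))
      obtain ⟨k, hk1, hk2, hk3⟩ := ih (slink D s) (by omega) y hysl
      refine ⟨k + 1, ?_, ?_, ?_⟩
      · rwa [Function.iterate_succ_apply]
      · intro j hj
        cases j with
        | zero => exact hy
        | succ j => rw [Function.iterate_succ_apply]; exact hk2 j (Nat.succ_le_succ_iff.mp hj)
      · intro j hj
        cases j with
        | zero => exact heq
        | succ j =>
          rw [Function.iterate_succ_apply]
          exact hk3 j (Nat.succ_lt_succ_iff.mp hj)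

/-- Specification of `flink` for nonempty strings. -/
lemma flink_spec {D : Finset (List α)} {p₀ : List α} (hp₀ : p₀ ∈ D) {s : List α}
    (hs : s ≠ []) :
    flink D s <:+ s.tail ∧ flink D s ∈ Pref D ∧
      ∀ y, y <:+ s.tail → y ∈ Pref D → y <:+ flink D s := by
  classical
  have hnil : (fun y => decide (y ∈ Pref D)) [] = true := by
    simp only [decide_eq_true_iff]
    exact ⟨p₀, hp₀, List.nil_prefix⟩
  obtain ⟨a, l, rfl⟩ := List.exists_cons_of_ne_nil hs
  have htl : ((a :: l).tails.drop 1) = l.tails := by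
    rw [List.tails_cons, List.drop_one, List.tail_cons]
  obtain ⟨h1, h2, h3⟩ := headI_filter_tails (fun y => decide (y ∈ Pref D)) hnil l
  simp only [decide_eq_true_iff] at h2
  refine ⟨?_, ?_, ?_⟩
  · rw [flink, htl]
    show _ <:+ l
    convert h1 using 3
  · rw [flink, htl]
    convert h2 using 4
  · intro y hy hyP
    rw [flink, htl]
    have := h3 y hy (by simp only [decide_eq_true_iff]; exact hyP)
    convert this using 3

/-- For a dictionary `D`, a nonempty `s ∈ Pref D` and `s' ∈ Pref D`,
with `(slink D)^[i] s` the suffix-link chain of `s`: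
`s' = flink D s` iff there is `k ≥ 1` such that `x_k` is defined (i.e. all of
`x_0, …, x_{k-1}` are nonempty), `x_k ≡_D s'`, and for every `1 ≤ i < k` no
`y ∈ Substr D` with `y ≡_D x_i` belongs to `Pref D`. -/
theorem stmt0 [Fintype α] (D : Finset (List α)) (hD : ∀ p ∈ D, p ≠ [])
    (s s' : List α) (hs : s ∈ Pref D) (hs0 : s ≠ []) (hs' : s' ∈ Pref D) :
    s' = flink D s ↔
      ∃ k ≥ 1, (∀ i < k, (slink D)^[i] s ≠ []) ∧
        eqv D ((slink D)^[k] s) s' ∧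
        (∀ i, 1 ≤ i → i < k →
          ∀ y ∈ Substr D, eqv D y ((slink D)^[i] s) → y ∉ Pref D) := by
  obtain ⟨p₀, hp₀, hsp₀⟩ := hs
  obtain ⟨ht_tail, htP, htmax⟩ := flink_spec hp₀ hs0
  have ht_suf : flink D s <:+ s := ht_tail.trans (List.tail_suffix s)
  have ht_len : (flink D s).length < s.length := by
    have h1 : (flink D s).length ≤ s.tail.length := ht_tail.length_le
    have h2 : s.tail.length < s.length := by
      cases s with
      | nil => exact absurd rfl hs0
      | cons a l => simp
    omega
  obtain ⟨k₀, hc1, hc2, hc3⟩ := chain_lemma hp₀ s.length s le_rfl (flink D s) ht_suf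
  have hsE : (p₀, s.length) ∈ ePos D s := mem_ePos_of_pref hp₀ hsp₀
  have hk₀pos : 1 ≤ k₀ := by
    by_contra h
    push_neg at h
    have hk0 : k₀ = 0 := by omega
    subst hk0
    have hst : s = flink D s := eq_of_eqv_pref ⟨p₀, hp₀, hsp₀⟩ htP hc1
    have := congrArg List.length hst
    omega
  have hXne : ∀ i < k₀, (slink D)^[i] s ≠ [] := by
    intro i hi hnil
    have h1 := hc2 i (le_of_lt hi)
    rw [hnil] at h1
    have ht0 : flink D s = [] := List.suffix_nil.mp h1
    exact hc3 i hi (show ePos D ((slink D)^[i] s) = ePos D (flink D s) by rw [hnil, ht0])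
  -- key fact: no string equivalent to an intermediate class lies in `Pref D`
  have F2 : ∀ i, 1 ≤ i → i < k₀ →
      ∀ y ∈ Substr D, eqv D y ((slink D)^[i] s) → y ∉ Pref D := by
    intro i hi1 hik y _ hyeqv hyP
    have hyeqv' : ePos D y = ePos D ((slink D)^[i] s) := hyeqv
    have hXi_suf : (slink D)^[i] s <:+ s := slink_iterate_suffix hp₀ s i
    have hEi : (p₀, s.length) ∈ ePos D ((slink D)^[i] s) := ePos_mono hXi_suf hsE
    have hEy : (p₀, s.length) ∈ ePos D y := by rw [hyeqv']; exact hEi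
    have hylen : y.length ≤ s.length := hEy.2.1
    have hysuf : y <:+ s := suffix_of_mem_ePos hEy hsE hylen
    have hyne : y ≠ s := by
      intro h
      have hXi_X1 : (slink D)^[i] s <:+ (slink D)^[1] s := by
        have hh : (slink D)^[i] s = (slink D)^[i-1] ((slink D)^[1] s) := by
          rw [← Function.iterate_add_apply]
          congr 1
          omega
        rw [hh]
        exact slink_iterate_suffix hp₀ _ _
      have hsub1 : ePos D s ⊆ ePos D ((slink D)^[1] s) :=
        ePos_mono (slink_iterate_suffix hp₀ s 1)
      have hsub2 : ePos D ((slink D)^[1] s) ⊆ ePos D ((slink D)^[i] s) := ePos_mono hXi_X1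
      have hEq : ePos D s = ePos D ((slink D)^[1] s) := by
        apply Set.Subset.antisymm hsub1
        intro z hz
        have hz2 := hsub2 hz
        rw [← hyeqv', h] at hz2
        exact hz2
      have : eqv D s (slink D s) := by
        show ePos D s = ePos D (slink D s)
        rw [hEq, Function.iterate_one]
      exact (slink_spec hp₀ hs0).2.1 this
    have hytail : y <:+ s.tail := by
      cases s with
      | nil => exact absurd rfl hs0
      | cons a l =>
        rcases List.suffix_cons_iff.mp hysuf with h | h
        · exact absurd h hyne
        · exact h
    have hyt : y <:+ flink D s := htmax y hytail hyP
    have h1 : ePos D ((slink D)^[i] s) ⊆ ePos D (flink D s) := ePos_mono (hc2 i hik.le)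
    have h2 : ePos D (flink D s) ⊆ ePos D y := ePos_mono hyt
    have h3 : ePos D ((slink D)^[i] s) = ePos D (flink D s) := by
      apply Set.Subset.antisymm h1
      intro z hz
      have := h2 hz
      rwa [hyeqv'] at this
    exact hc3 i hik h3
  constructor
  · rintro rfl
    exact ⟨k₀, hk₀pos, hXne, hc1, F2⟩
  · rintro ⟨k, hk1, _, hkeqv, hkcond⟩
    have hkeqv' : ePos D ((slink D)^[k] s) = ePos D s' := hkeqv
    have hc1' : ePos D ((slink D)^[k₀] s) = ePos D (flink D s) := hc1
    have hs'sub : s' ∈ Substr D := by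
      obtain ⟨p, hp1, hp2⟩ := hs'
      exact ⟨p, hp1, hp2.isInfix⟩
    have htsub : flink D s ∈ Substr D := by
      obtain ⟨p, hp1, hp2⟩ := htP
      exact ⟨p, hp1, hp2.isInfix⟩
    rcases lt_trichotomy k k₀ with hlt | heq | hgt
    · exact absurd hs' (F2 k hk1 hlt s' hs'sub hkeqv'.symm)
    · subst heq
      exact eq_of_eqv_pref hs' htP
        (show ePos D s' = ePos D (flink D s) by rw [← hkeqv', hc1'])
    · exact absurd htP (hkcond k₀ hk₀pos hgt (flink D s) htsub hc1'.symm)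
end

section
/- A string x ∈ Substr(D) is the longest member of [x]_D if and only if either x ∈ Pref(D), or there exist two distinct symbols a, b ∈ Σ such that both ax ∈ Substr(D) and bx ∈ Substr(D). -/
variable {α : Type*}

lemma mem_ePos_iff (D : Finset (List α)) (x : List α) (q : List α) (j : ℕ) :
    (q, j) ∈ ePos D x ↔ q ∈ D ∧ x.length ≤ j ∧ j ≤ q.length ∧ x <:+ q.take j := by
  unfold ePos
  simp only [Set.mem_setOf_eq]
  constructor
  · rintro ⟨h1, h2, h3, h4⟩
    exact ⟨h1, h2, h3, h4 ▸ List.drop_suffix _ _⟩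
  · rintro ⟨h1, h2, h3, h4⟩
    refine ⟨h1, h2, h3, ?_⟩
    obtain ⟨t, ht⟩ := h4
    have hlen : (q.take j).length = j := by simp [h3]
    have htl : t.length = j - x.length := by
      have := congrArg List.length ht
      simp [hlen] at this; omega
    rw [← ht, ← htl, List.drop_left]

lemma mem_substr_iff (D : Finset (List α)) (x : List α) :
    x ∈ Substr D ↔ ∃ q j, (q, j) ∈ ePos D x := by
  constructor
  · rintro ⟨p, hp, s, t, hst⟩
    refine ⟨p, (s ++ x).length, (mem_ePos_iff D x p _).2 ⟨hp, by simp, ?_, ?_⟩⟩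
    · have := congrArg List.length hst; simp at this ⊢; omega
    · rw [← hst, List.take_left]
      exact ⟨s, rfl⟩
  · rintro ⟨q, j, hq⟩
    rw [mem_ePos_iff] at hq
    obtain ⟨h1, h2, h3, t, ht⟩ := hq
    exact ⟨q, h1, t, q.drop j, by rw [ht, List.take_append_drop]⟩

/-- If `x` occurs ending at position `j > |x|`, some left extension `a :: x`
occurs ending at the same position. -/
lemma exists_ext (D : Finset (List α)) (x : List α) (q : List α) (j : ℕ)
    (hq : (q, j) ∈ ePos D x) (hj : x.length < j) :
    ∃ a : α, (q, j) ∈ ePos D (a :: x) := by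
  rw [mem_ePos_iff] at hq
  obtain ⟨h1, h2, h3, t, ht⟩ := hq
  have hlen : (q.take j).length = j := by simp [h3]
  have htl : t.length = j - x.length := by
    have := congrArg List.length ht
    simp [hlen] at this; omega
  have htne : t ≠ [] := by
    intro h; rw [h] at htl; simp at htl; omega
  obtain ⟨t', a, rfl⟩ := (List.eq_nil_or_concat t).resolve_left htne
  refine ⟨a, (mem_ePos_iff D _ q j).2 ⟨h1, by simp; omega, h3, ⟨t', ?_⟩⟩⟩
  rw [← ht]; simp

/-- If `x` occurs ending at position `j = |x|`, then `x ∈ Pref D`. -/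
lemma pref_of_pos (D : Finset (List α)) (x : List α) (q : List α)
    (hq : (q, x.length) ∈ ePos D x) : x ∈ Pref D := by
  rw [mem_ePos_iff] at hq
  obtain ⟨h1, _, h3, h4⟩ := hq
  have hlen : (q.take x.length).length = x.length := by simp [h3]
  have := h4.eq_of_length (by omega)
  exact ⟨q, h1, this ▸ List.take_prefix _ _⟩

/-- A string `x ∈ Substr D` is the longest member of `[x]_D`
iff either `x ∈ Pref D`, or there are two distinct symbols `a, b` with
`ax ∈ Substr D` and `bx ∈ Substr D`. -/
theorem stmt1 [Fintype α] (D : Finset (List α)) (hD : ∀ p ∈ D, p ≠ [])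
    (x : List α) (hx : x ∈ Substr D) :
    (∀ y ∈ Substr D, eqv D y x → y.length ≤ x.length) ↔
      (x ∈ Pref D ∨
        ∃ a b : α, a ≠ b ∧ (a :: x) ∈ Substr D ∧ (b :: x) ∈ Substr D) := by
  constructor
  · intro hlong
    by_contra hcon
    push_neg at hcon
    obtain ⟨hpref, hext⟩ := hcon
    -- get an occurrence of x; its end position must exceed |x|, giving a
    obtain ⟨q, j, hqj⟩ := (mem_substr_iff D x).1 hx
    have hj : x.length < j := by
      rcases lt_or_eq_of_le ((mem_ePos_iff D x q j).1 hqj).2.1 with h | h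
      · exact h
      · exact absurd (pref_of_pos D x q (h ▸ hqj)) hpref
    obtain ⟨a, ha⟩ := exists_ext D x q j hqj hj
    have haS : (a :: x) ∈ Substr D := (mem_substr_iff D _).2 ⟨q, j, ha⟩
    -- a::x is equivalent to x
    have heqv : eqv D (a :: x) x := by
      apply Set.eq_of_subset_of_subset
      · rintro ⟨q', j'⟩ hq'
        rw [mem_ePos_iff] at hq' ⊢
        obtain ⟨h1, h2, h3, h4⟩ := hq'
        exact ⟨h1, by simp at h2; omega, h3, ((List.suffix_cons a x)).trans h4⟩
      · rintro ⟨q', j'⟩ hq'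
        have hj' : x.length < j' := by
          rcases lt_or_eq_of_le ((mem_ePos_iff D x q' j').1 hq').2.1 with h | h
          · exact h
          · exact absurd (pref_of_pos D x q' (h ▸ hq')) hpref
        obtain ⟨b, hb⟩ := exists_ext D x q' j' hq' hj'
        have hbS : (b :: x) ∈ Substr D := (mem_substr_iff D _).2 ⟨q', j', hb⟩
        have hab : a = b := by
          by_contra hne
          exact hext a b hne haS hbS
        exact hab ▸ hb
    have := hlong (a :: x) haS heqv
    simp at this
  · rintro (hpref | ⟨a, b, hab, haS, hbS⟩) <;> intro y hyS hyx
    · -- x is a prefix: occurrence at j = |x| forces |y| ≤ |x|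
      obtain ⟨p, hp, hxp⟩ := hpref
      have hpos : (p, x.length) ∈ ePos D x := by
        rw [mem_ePos_iff]
        refine ⟨hp, le_refl _, hxp.length_le, ?_⟩
        rw [← List.prefix_iff_eq_take.1 hxp]
      have : (p, x.length) ∈ ePos D y := hyx ▸ hpos
      exact ((mem_ePos_iff D y p _).1 this).2.1
    · by_contra hlen
      push_neg at hlen
      -- an occurrence of a::x gives an occurrence of x, hence of y
      have key : ∀ c : α, (c :: x) ∈ Substr D → (c :: x) <:+ y := by
        intro c hcS
        obtain ⟨q, j, hq⟩ := (mem_substr_iff D _).1 hcS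
        rw [mem_ePos_iff] at hq
        obtain ⟨h1, h2, h3, h4⟩ := hq
        have hxq : (q, j) ∈ ePos D x := by
          rw [mem_ePos_iff]
          exact ⟨h1, by simp at h2; omega, h3, ((List.suffix_cons c x)).trans h4⟩
        have hyq : (q, j) ∈ ePos D y := hyx ▸ hxq
        rw [mem_ePos_iff] at hyq
        exact List.suffix_of_suffix_length_le h4 hyq.2.2.2 (by simp; omega)
      have h1 := key a haS
      have h2 := key b hbS
      have : a :: x = b :: x :=
        (List.suffix_of_suffix_length_le h1 h2 (by simp)).eq_of_length (by simp)
      simp at this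
      exact hab this
end

section
/- If x ∈ Substr(D) is the longest member of [x]_D and x ∉ Pref(D), then there exist distinct symbols a, b ∈ Σ such that ax ∈ Substr(D), bx ∈ Substr(D), ax ≢_D bx, and slink_D(ax) = x = slink_D(bx). (In particular, at least two distinct ≡_D-classes have their suffix link pointing to [x]_D.) -/
variable {α : Type*}

lemma mem_ePos {D : Finset (List α)} {x q : List α} {j : ℕ} :
    (q, j) ∈ ePos D x ↔ q ∈ D ∧ x.length ≤ j ∧ j ≤ q.length ∧
      x = (q.take j).drop (j - x.length) := Iff.rfl

lemma ePos_substr {D : Finset (List α)} {x q : List α} {j : ℕ}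
    (h : (q, j) ∈ ePos D x) : x ∈ Substr D := by
  obtain ⟨hq, _, _, hx⟩ := h
  exact ⟨q, hq, hx ▸ ((List.drop_suffix _ _).isInfix.trans
    (List.take_prefix _ _).isInfix)⟩

lemma substr_ePos {D : Finset (List α)} {x : List α} (h : x ∈ Substr D) :
    ∃ q j, (q, j) ∈ ePos D x := by
  obtain ⟨p, hp, s, t, hst⟩ := h
  refine ⟨p, s.length + x.length, hp, le_add_self, ?_, ?_⟩
  · rw [← hst]; simp [List.length_append]
  · have : p.take (s.length + x.length) = s ++ x := by
      rw [← hst, ← List.length_append (as := s) (bs := x), List.take_left]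
    rw [this]; simp

lemma ePos_cons_mem {D : Finset (List α)} {x q : List α} {a : α} {j : ℕ}
    (h : (q, j) ∈ ePos D (a :: x)) : (q, j) ∈ ePos D x := by
  obtain ⟨hq, hl, hr, hx⟩ := h
  dsimp only at hq hl hr hx
  simp only [List.length_cons] at hl hx
  refine ⟨hq, by omega, hr, ?_⟩
  have h1 : j - x.length = (j - (x.length + 1)) + 1 := by omega
  rw [h1, ← List.drop_drop (i := 1), ← hx]
  simp

lemma ePos_cons_inj {D : Finset (List α)} {x q : List α} {a b : α} {j : ℕ}
    (h1 : (q, j) ∈ ePos D (a :: x)) (h2 : (q, j) ∈ ePos D (b :: x)) : a = b := by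
  obtain ⟨_, _, _, hx1⟩ := h1
  obtain ⟨_, _, _, hx2⟩ := h2
  dsimp only at hx1 hx2
  simp only [List.length_cons] at hx1 hx2
  rw [← hx2] at hx1
  exact (List.cons.injEq .. ▸ hx1).1

lemma ePos_exists_cons {D : Finset (List α)} {x q : List α} {j : ℕ}
    (h : (q, j) ∈ ePos D x) (hj : x.length < j) :
    ∃ a, (q, j) ∈ ePos D (a :: x) := by
  obtain ⟨hq, hl, hr, hx⟩ := h
  dsimp only at hq hl hr hx
  have hlen : j - x.length - 1 < (q.take j).length := by
    simp [List.length_take]; omega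
  refine ⟨(q.take j)[j - x.length - 1], hq, by simp; omega, hr, ?_⟩
  rw [List.length_cons, show j - (x.length + 1) = j - x.length - 1 by omega,
    List.drop_eq_getElem_cons hlen, show j - x.length - 1 + 1 = j - x.length by omega,
    ← hx]

lemma ePos_pos {D : Finset (List α)} {x q : List α} {j : ℕ}
    (hnp : x ∉ Pref D) (h : (q, j) ∈ ePos D x) : x.length < j := by
  obtain ⟨hq, hl, hr, hx⟩ := h
  dsimp only at hq hl hr hx
  rcases lt_or_eq_of_le hl with h' | h'
  · exact h'
  · exfalso
    apply hnp
    refine ⟨q, hq, ?_⟩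
    rw [← h', Nat.sub_self, List.drop_zero] at hx
    exact hx ▸ List.take_prefix _ _

lemma slink_cons {D : Finset (List α)} {x : List α} {a : α}
    (h : ¬ eqv D (a :: x) x) : slink D (a :: x) = x := by
  classical
  unfold slink
  have hrefl : eqv D (a :: x) (a :: x) := rfl
  cases x with
  | nil => simp [hrefl, h]
  | cons c x' => simp [List.tails_cons, hrefl, h]

/-- If `x ∈ Substr D` is the longest member of `[x]_D` and
`x ∉ Pref D`, then there are distinct symbols `a, b` with `ax, bx ∈ Substr D`,
`ax ≢_D bx`, and `slink D (ax) = x = slink D (bx)`. -/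
theorem stmt2 [Fintype α] (D : Finset (List α)) (hD : ∀ p ∈ D, p ≠ [])
    (x : List α) (hx : x ∈ Substr D)
    (hlong : ∀ y ∈ Substr D, eqv D y x → y.length ≤ x.length)
    (hnp : x ∉ Pref D) :
    ∃ a b : α, a ≠ b ∧ (a :: x) ∈ Substr D ∧ (b :: x) ∈ Substr D ∧
      ¬ eqv D (a :: x) (b :: x) ∧ slink D (a :: x) = x ∧ slink D (b :: x) = x := by
  obtain ⟨q₀, j₀, h₀⟩ := substr_ePos hx
  obtain ⟨a, ha⟩ := ePos_exists_cons h₀ (ePos_pos hnp h₀)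
  by_cases hall : ∀ qj : List α × ℕ, qj ∈ ePos D x → qj ∈ ePos D (a :: x)
  · exfalso
    have heq : eqv D (a :: x) x :=
      Set.Subset.antisymm (fun qj hqj => ePos_cons_mem (x := x) (q := qj.1) (j := qj.2) hqj) hall
    have := hlong (a :: x) (ePos_substr ha) heq
    simp at this
  · push_neg at hall
    obtain ⟨⟨q, j⟩, hqx, hqax⟩ := hall
    obtain ⟨b, hb⟩ := ePos_exists_cons hqx (ePos_pos hnp hqx)
    have hab : a ≠ b := fun h => hqax (h ▸ hb)
    have hax : ¬ eqv D (a :: x) x := fun h => hqax (h ▸ hqx)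
    have hbx : ¬ eqv D (b :: x) x := by
      intro h
      exact hab (ePos_cons_inj ha (h ▸ (ePos_cons_mem ha : (q₀, j₀) ∈ ePos D x) : (q₀, j₀) ∈ ePos D (b :: x)))
    refine ⟨a, b, hab, ePos_substr ha, ePos_substr hb, ?_, slink_cons hax, slink_cons hbx⟩
    intro h
    exact hab (ePos_cons_inj ha (h ▸ ha))
end

section
/- If x, x' ∈ Substr(D) are nonempty and x ≡_D x', then slink_D(x) = slink_D(x') as strings; that is, the suffix link is well defined on ≡_D-equivalence classes. -/
variable {α : Type*}

section Aux
open Classical in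
lemma ePos_anti (D : Finset (List α)) {s t : List α} (h : s <:+ t) :
    ePos D t ⊆ ePos D s := by
  rintro ⟨q, j⟩ ⟨hq, hlen, hj, heq⟩
  obtain ⟨u, rfl⟩ := h
  have hlen' : u.length + s.length ≤ j := by simpa using hlen
  refine ⟨hq, by omega, hj, ?_⟩
  calc s = (u ++ s).drop u.length := by simp
    _ = ((q.take j).drop (j - (u ++ s).length)).drop u.length := by rw [← heq]
    _ = (q.take j).drop (j - s.length) := by
        rw [List.drop_drop]; congr 1; simp only [List.length_append]; omega

lemma ePos_nonempty (D : Finset (List α)) {x : List α} (hx : x ∈ Substr D) :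
    (ePos D x).Nonempty := by
  obtain ⟨p, hp, s, t, rfl⟩ := hx
  refine ⟨⟨s ++ x ++ t, s.length + x.length⟩, hp, by omega, by simp, ?_⟩
  simp [List.take_append, List.drop_append]

lemma drop_suffix_drop (l : List α) {m n : ℕ} (h : n ≤ m) :
    l.drop m <:+ l.drop n := by
  have hd : (l.drop n).drop (m - n) = l.drop m := by
    rw [List.drop_drop]; congr 1; omega
  rw [← hd]; exact List.drop_suffix _ _

lemma suffix_or (D : Finset (List α)) {x x' : List α} (hx : x ∈ Substr D)
    (he : eqv D x x') : x <:+ x' ∨ x' <:+ x := by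
  obtain ⟨⟨q, j⟩, hm⟩ := ePos_nonempty D hx
  have hm' : (⟨q, j⟩ : List α × ℕ) ∈ ePos D x' := by rw [← he]; exact hm
  obtain ⟨-, hl, hj, heq⟩ := hm
  obtain ⟨-, hl', -, heq'⟩ := hm'
  rcases le_total x.length x'.length with h | h
  · left; rw [heq, heq']; exact drop_suffix_drop _ (by omega)
  · right; rw [heq, heq']; exact drop_suffix_drop _ (by omega)

open Classical in
lemma key_filter (D : Finset (List α)) (S : Set (List α × ℕ)) :
    ∀ (x x' : List α), x' <:+ x → ePos D x = S → ePos D x' = S →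
      x.tails.filter (fun y => @decide (ePos D y ≠ S) (Classical.propDecidable _)) =
      x'.tails.filter (fun y => @decide (ePos D y ≠ S) (Classical.propDecidable _)) := by
  intro x
  induction x with
  | nil => intro x' h _ _; rw [List.suffix_nil.mp h]
  | cons a t ih =>
    intro x' h hx hx'
    rcases List.suffix_cons_iff.mp h with rfl | h'
    · rfl
    · have ht : ePos D t = S := by
        apply Set.Subset.antisymm
        · rw [← hx']; exact ePos_anti D h'
        · rw [← hx]; exact ePos_anti D (List.suffix_cons a t)
      rw [List.tails_cons, List.filter_cons_of_neg (by simp [hx]),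
        ih x' h' ht hx']
end Aux

/-- If `x, x' ∈ Substr D` are nonempty and `x ≡_D x'`, then
`slink D x = slink D x'`: the suffix link is well defined on `≡_D`-classes. -/
theorem stmt3 [Fintype α] (D : Finset (List α)) (hD : ∀ p ∈ D, p ≠ [])
    (x x' : List α) (hx : x ∈ Substr D) (hx' : x' ∈ Substr D)
    (h0 : x ≠ []) (h0' : x' ≠ []) (he : eqv D x x') :
    slink D x = slink D x' := by
  classical
  obtain h | h := suffix_or D hx he
  all_goals {
    unfold slink
    have conv1 : ∀ z : List α, eqv D z x →
        (z.tails.filter (fun y => @decide (¬ eqv D z y) (Classical.propDecidable _))) =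
        (z.tails.filter (fun y => @decide (ePos D y ≠ ePos D x) (Classical.propDecidable _))) := by
      intro z hz
      apply List.filter_congr
      intro y _
      rw [decide_eq_decide]
      unfold eqv at hz ⊢
      rw [hz]
      exact not_iff_not.mpr eq_comm
    rw [conv1 x (by rfl), conv1 x' (by unfold eqv at he ⊢; rw [he])]
    have he' : ePos D x = ePos D x' := he
    first
      | rw [key_filter D (ePos D x) x' x h he'.symm rfl]
      | rw [key_filter D (ePos D x) x x' h rfl he'.symm]
  }
end

section
/- For all s, s' ∈ Pref(D), if s ≡_D s' then s = s'; moreover every s ∈ Pref(D) is the longest member of [s]_D. Consequently, the map s ↦ [s]_D is a bijection from Pref(D) onto the set of ≡_D-equivalence classes that contain an element of Pref(D) (the trunk classes of the DAWG of D). -/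
variable {α : Type*}

/-- The `≡_D`-equivalence class `[x]_D` of `x` within `Substr D`. -/
def cls (D : Finset (List α)) (x : List α) : Set (List α) :=
  {y | y ∈ Substr D ∧ eqv D y x}

lemma pref_mem_ePos {D : Finset (List α)} {s p : List α} (hp : p ∈ D) (hs : s <+: p) :
    (p, s.length) ∈ ePos D s := by
  refine ⟨hp, le_refl _, hs.length_le, ?_⟩
  rw [Nat.sub_self, List.drop_zero, ← List.prefix_iff_eq_take.mp hs]

lemma eqv_longest {D : Finset (List α)} {s y : List α} (hs : s ∈ Pref D)
    (h : eqv D y s) : y.length ≤ s.length ∧ (y.length = s.length → y = s) := by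
  obtain ⟨p, hp, hsp⟩ := hs
  have hm : (p, s.length) ∈ ePos D y := h ▸ pref_mem_ePos hp hsp
  obtain ⟨-, hle, -, hy⟩ := hm
  refine ⟨hle, fun heq => ?_⟩
  rw [heq, Nat.sub_self, List.drop_zero, ← List.prefix_iff_eq_take.mp hsp] at hy
  exact hy

lemma cls_eq_of_eqv {D : Finset (List α)} {x y : List α} (h : eqv D x y) :
    cls D x = cls D y := by
  ext z; unfold cls eqv at *; rw [h]

/-- Distinct elements of `Pref D` are `≡_D`-inequivalent; every
`s ∈ Pref D` is the longest member of `[s]_D`; and `s ↦ [s]_D` is a bijection from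
`Pref D` onto the set of `≡_D`-classes containing an element of `Pref D`
(the trunk classes of the DAWG of `D`). -/
theorem stmt8 [Fintype α] (D : Finset (List α)) (hD : ∀ p ∈ D, p ≠ []) :
    (∀ s ∈ Pref D, ∀ s' ∈ Pref D, eqv D s s' → s = s') ∧
    (∀ s ∈ Pref D, ∀ y ∈ Substr D, eqv D y s → y.length ≤ s.length) ∧
    Set.BijOn (fun s => cls D s) (Pref D)
      {C : Set (List α) | ∃ x ∈ Substr D, C = cls D x ∧ (C ∩ Pref D).Nonempty} := by
  have key : ∀ s ∈ Pref D, ∀ s', eqv D s' s → s'.length ≤ s.length ∧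
      (s'.length = s.length → s' = s) := fun s hs s' h => eqv_longest hs h
  have inj : ∀ s ∈ Pref D, ∀ s' ∈ Pref D, eqv D s s' → s = s' := by
    intro s hs s' hs' h
    have h1 := key s' hs' s h
    have h2 := key s hs s' h.symm
    exact h1.2 (le_antisymm h1.1 h2.1)
  have psub : ∀ s ∈ Pref D, s ∈ Substr D := by
    rintro s ⟨p, hp, hsp⟩; exact ⟨p, hp, hsp.isInfix⟩
  refine ⟨inj, fun s hs y _ h => (key s hs y h).1, ?_, ?_, ?_⟩
  · intro s hs
    exact ⟨s, psub s hs, rfl, s, ⟨psub s hs, rfl⟩, hs⟩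
  · intro s hs s' hs' h
    have hm : s ∈ cls D s' := by
      have : cls D s = cls D s' := h
      rw [← this]; exact ⟨psub s hs, rfl⟩
    exact inj s hs s' hs' hm.2
  · rintro C ⟨x, hx, rfl, y, ⟨_, hyx⟩, hy⟩
    refine ⟨y, hy, ?_⟩
    show cls D y = cls D x
    exact cls_eq_of_eqv hyx
end

section
/- Let D be a dictionary, let p be a nonempty string, and let D' = D ∪ {p}. Then for every s ∈ Pref(D) with s ≠ ε: flink_{D'}(s) ≠ flink_D(s) if and only if flink_{D'}(s) is a nonempty prefix of p that does not belong to Pref(D). (This characterizes exactly the states of the Aho–Corasick automaton whose failure links must be updated when p is inserted.) -/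
variable {α : Type*}

section AuxFlink
variable {α : Type*}

theorem flink_key (P : List α → Bool) (t : List α) :
    ∀ y, y <:+ t → P y = true →
      P ((t.tails.filter P).headI) = true ∧
      ((t.tails.filter P).headI) <:+ t ∧
      y.length ≤ ((t.tails.filter P).headI).length := by
  induction t with
  | nil =>
    intro y hy hPy
    have hy0 : y = [] := List.suffix_nil.mp hy
    subst hy0
    have h0 : ([] : List α).tails = [[]] := by simp [List.tails]
    rw [h0, List.filter_cons_of_pos hPy]
    exact ⟨hPy, List.suffix_refl _, le_refl _⟩
  | cons a t ih =>
    intro y hy hPy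
    rw [List.tails_cons]
    by_cases h : P (a :: t) = true
    · rw [List.filter_cons_of_pos h]
      exact ⟨h, List.suffix_refl _, hy.length_le⟩
    · rw [List.filter_cons_of_neg (by simpa using h)]
      have hy' : y <:+ t := by
        rcases List.suffix_cons_iff.mp hy with rfl | hyt
        · exact absurd hPy h
        · exact hyt
      obtain ⟨h1, h2, h3⟩ := ih y hy' hPy
      exact ⟨h1, h2.trans (List.suffix_cons a t), h3⟩

theorem flink_cons' (D : Finset (List α)) (a : α) (t : List α) :
    flink D (a :: t) =
      ((t.tails.filter (fun y =>
        @decide (y ∈ Pref D) (Classical.propDecidable _))).headI) := by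
  simp [flink, List.tails_cons]

end AuxFlink

/-- Let `D' = D ∪ {p}` for a nonempty string `p`. Then for every
nonempty `s ∈ Pref D`: `flink_{D'}(s) ≠ flink_D(s)` iff `flink_{D'}(s)` is a
nonempty prefix of `p` that does not belong to `Pref D`. -/
theorem stmt9 [Fintype α] [DecidableEq α] (D : Finset (List α))
    (hD : ∀ q ∈ D, q ≠ []) (p : List α) (hp : p ≠ [])
    (s : List α) (hs : s ∈ Pref D) (hs0 : s ≠ []) :
    flink (insert p D) s ≠ flink D s ↔
      (flink (insert p D) s ≠ [] ∧ flink (insert p D) s <+: p ∧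
        flink (insert p D) s ∉ Pref D) := by

  obtain ⟨a, t, rfl⟩ : ∃ a t, s = a :: t := by
    cases s with
    | nil => exact absurd rfl hs0
    | cons a t => exact ⟨a, t, rfl⟩
  set P : List α → Bool := fun y => @decide (y ∈ Pref D) (Classical.propDecidable _) with hP
  set P' : List α → Bool :=
    fun y => @decide (y ∈ Pref (insert p D)) (Classical.propDecidable _) with hP'
  have hsub : ∀ x : List α, x ∈ Pref D → x ∈ Pref (insert p D) := by
    rintro x ⟨q, hq, hx⟩
    exact ⟨q, Finset.mem_insert_of_mem hq, hx⟩
  have hnilD : ([] : List α) ∈ Pref D := by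
    obtain ⟨q, hq, -⟩ := hs
    exact ⟨q, hq, List.nil_prefix⟩
  have hfd : flink D (a :: t) = ((t.tails.filter P).headI) := flink_cons' D a t
  have hfd' : flink (insert p D) (a :: t) = ((t.tails.filter P').headI) :=
    flink_cons' (insert p D) a t
  rw [hfd, hfd']
  set f : List α := (t.tails.filter P).headI with hf
  set f' : List α := (t.tails.filter P').headI with hf'
  obtain ⟨hPf, hfsuf, -⟩ :=
    flink_key P t [] List.nil_suffix (@decide_eq_true _ (Classical.propDecidable _) hnilD)
  have hfmem : f ∈ Pref D := @of_decide_eq_true _ (Classical.propDecidable _) hPf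
  obtain ⟨hPf', hf'suf, hlen⟩ :=
    flink_key P' t f hfsuf (@decide_eq_true _ (Classical.propDecidable _) (hsub f hfmem))
  have hf'mem : f' ∈ Pref (insert p D) := @of_decide_eq_true _ (Classical.propDecidable _) hPf'
  constructor
  · intro hne
    have hnotD : f' ∉ Pref D := by
      intro hmem
      obtain ⟨-, -, hlen2⟩ := flink_key P t f' hf'suf (@decide_eq_true _ (Classical.propDecidable _) hmem)
      have heq : f'.length = f.length := le_antisymm hlen2 hlen
      rcases List.suffix_or_suffix_of_suffix hf'suf hfsuf with h | h
      · exact hne (h.eq_of_length heq)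
      · exact hne ((h.eq_of_length heq.symm).symm)
    refine ⟨?_, ?_, hnotD⟩
    · intro h0; exact hnotD (by rw [h0]; exact hnilD)
    · obtain ⟨q, hq, hpre⟩ := hf'mem
      rcases Finset.mem_insert.mp hq with rfl | hqD
      · exact hpre
      · exact absurd ⟨q, hqD, hpre⟩ hnotD
  · rintro ⟨-, -, hnotD⟩ heq
    exact hnotD (heq ▸ hfmem)
end

section
/- Let a, b ∈ Σ be distinct symbols with |Σ| ≥ 3, let h ≥ 1, let D = { (ab)^i a^j c : 1 ≤ i ≤ h, j ∈ {0,1}, c ∈ Σ∖{a,b} }, and let p = (ba)^h. Then for every i with 1 ≤ i ≤ h: b(ab)^{i−1} ≡_D (ab)^i and b(ab)^{i−1}a ≡_D (ab)^i a, whereas b(ab)^{i−1} ≢_{D∪{p}} (ab)^i and b(ab)^{i−1}a ≢_{D∪{p}} (ab)^i a. (Hence inserting p splits a DAWG node for every one of its 2h nonempty prefixes.) -/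
variable {α : Type*}

/-- `wpow w i` is the `i`-fold concatenation `w^i`. -/
def wpow (w : List α) (i : ℕ) : List α := (List.replicate i w).flatten

/-- The dictionary `D = { (ab)^i a^j c : 1 ≤ i ≤ h, j ∈ {0,1}, c ∈ Σ \ {a,b} }`. -/
def lowDict [Fintype α] [DecidableEq α] (a b : α) (h : ℕ) : Finset (List α) :=
  ((Finset.Icc 1 h) ×ˢ (Finset.range 2) ×ˢ
      (Finset.univ.filter fun c => c ≠ a ∧ c ≠ b)).image
    (fun t => wpow [a, b] t.1 ++ List.replicate t.2.1 a ++ [t.2.2])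

lemma wpow_succ (w : List α) (n : ℕ) : wpow w (n+1) = w ++ wpow w n := by
  simp [wpow, List.replicate_succ]

lemma wpow_zero (w : List α) : wpow w 0 = [] := by simp [wpow]

lemma wpow_add (w : List α) (m n : ℕ) : wpow w (m+n) = wpow w m ++ wpow w n := by
  induction m with
  | zero => simp [wpow_zero]
  | succ k ih => rw [Nat.succ_add, wpow_succ, wpow_succ, ih, List.append_assoc]

lemma wpow_ab_len (a b : α) (n : ℕ) : (wpow [a,b] n).length = 2*n := by
  induction n with
  | zero => simp [wpow_zero]
  | succ k ih => rw [wpow_succ]; simp [ih]; omega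

lemma wpow_ba (a b : α) (n : ℕ) : wpow [b,a] (n+1) = b :: wpow [a,b] n ++ [a] := by
  induction n with
  | zero => simp [wpow_succ, wpow_zero]
  | succ k ih =>
      rw [wpow_succ, ih, wpow_succ]
      simp

lemma occ_iff (q x : List α) (m : ℕ) :
    (x.length ≤ m ∧ m ≤ q.length ∧ x = (q.take m).drop (m - x.length)) ↔
    ∃ u v, q = u ++ x ++ v ∧ u.length + x.length = m := by
  constructor
  · rintro ⟨h1, h2, h3⟩
    generalize hl : x.length = l at h1 h3
    refine ⟨q.take (m - l), q.drop m, ?_,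
      by rw [List.length_take, min_eq_left (by omega)]; omega⟩
    conv_lhs => rw [← List.take_append_drop m q,
      ← List.take_append_drop (m - l) (q.take m), List.take_take, min_eq_left (by omega)]
    rw [h3]
  · rintro ⟨u, v, rfl, hm⟩
    obtain rfl : m = u.length + x.length := hm.symm
    have ht : (u ++ x ++ v).take (u.length + x.length) = u ++ x := by
      rw [show u.length + x.length = (u ++ x).length by simp, List.take_left]
    refine ⟨by omega, by rw [List.length_append, List.length_append]; omega, ?_⟩
    rw [Nat.add_sub_cancel, ht, List.drop_left]

lemma KL (a b : α) (hab : a ≠ b) :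
    ∀ k j (c : α) (r u v : List α), j ≤ 1 → c ≠ a → c ≠ b →
    wpow [a,b] k ++ List.replicate j a ++ [c] = u ++ (b :: r) ++ v →
    ∃ u', u = u' ++ [a] := by
  intro k
  induction k with
  | zero =>
      intro j c r u v hj hca hcb heq
      exfalso
      have hb : b ∈ List.replicate j a ++ [c] := by
        rw [wpow_zero, List.nil_append] at heq; rw [heq]; simp
      rcases List.mem_append.mp hb with hb | hb
      · exact hab (List.eq_of_mem_replicate hb).symm
      · exact hcb (List.mem_singleton.mp hb).symm
  | succ k ih =>
      intro j c r u v hj hca hcb heq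
      rw [wpow_succ] at heq
      simp only [List.cons_append, List.nil_append, List.append_assoc] at heq
      cases u with
      | nil =>
          simp only [List.nil_append, List.cons_append] at heq
          exact absurd (List.head_eq_of_cons_eq heq) hab
      | cons x u'' =>
          simp only [List.cons_append] at heq
          obtain ⟨rfl, heq2⟩ : a = x ∧ _ := List.cons_eq_cons.mp heq |>.imp id id
          cases u'' with
          | nil =>
              exact ⟨[], by simp⟩
          | cons y u₂ =>
              simp only [List.cons_append] at heq2
              obtain ⟨rfl, heq3⟩ := List.cons_eq_cons.mp heq2
              obtain ⟨u', rfl⟩ := ih j c r u₂ v hj hca hcb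
                (by simpa [List.append_assoc] using heq3)
              exact ⟨a :: b :: u', by simp⟩

lemma eqv_cons (a : α) (D : Finset (List α)) (x : List α)
    (H : ∀ q ∈ D, ∀ u v, q = u ++ x ++ v → ∃ u', u = u' ++ [a]) :
    eqv D x (a :: x) := by
  unfold eqv ePos
  ext ⟨q, m⟩
  simp only [Set.mem_setOf_eq]
  constructor
  · rintro ⟨hq, h1, h2, h3⟩
    obtain ⟨u, v, hquv, hm⟩ := (occ_iff q x m).mp ⟨h1, h2, h3⟩
    obtain ⟨u', rfl⟩ := H q hq u v hquv
    have hd : q = u' ++ (a :: x) ++ v := by rw [hquv]; simp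
    have hmd : u'.length + (a :: x).length = m := by
      simp only [List.length_append, List.length_cons, List.length_singleton, List.length_nil] at hm ⊢
      omega
    have := (occ_iff q (a :: x) m).mpr ⟨u', v, hd, hmd⟩
    exact ⟨hq, this.1, this.2.1, this.2.2⟩
  · rintro ⟨hq, h1, h2, h3⟩
    obtain ⟨u, v, hquv, hm⟩ := (occ_iff q (a :: x) m).mp ⟨h1, h2, h3⟩
    have hd : q = (u ++ [a]) ++ x ++ v := by rw [hquv]; simp
    have := (occ_iff q x m).mpr ⟨u ++ [a], v, hd, by
      simp only [List.length_append, List.length_cons, List.length_singleton, List.length_nil] at hm ⊢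
      omega⟩
    exact ⟨hq, this.1, this.2.1, this.2.2⟩

lemma wpow_a_cons (a b : α) (n : ℕ) : ∃ w, wpow [a,b] n ++ [a] = a :: w := by
  cases n with
  | zero => exact ⟨[], by simp [wpow_zero]⟩
  | succ m => exact ⟨b :: (wpow [a,b] m ++ [a]), by rw [wpow_succ]; simp⟩

private theorem stmt11_aux [Fintype α] [DecidableEq α] (hcard : 3 ≤ Fintype.card α)
    (a b : α) (hab : a ≠ b) (h : ℕ) (hh : 1 ≤ h) :
    ∀ i, 1 ≤ i → i ≤ h →
      eqv (lowDict a b h) (b :: wpow [a, b] (i - 1)) (wpow [a, b] i) ∧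
      eqv (lowDict a b h) (b :: wpow [a, b] (i - 1) ++ [a]) (wpow [a, b] i ++ [a]) ∧
      ¬ eqv (insert (wpow [b, a] h) (lowDict a b h))
          (b :: wpow [a, b] (i - 1)) (wpow [a, b] i) ∧
      ¬ eqv (insert (wpow [b, a] h) (lowDict a b h))
          (b :: wpow [a, b] (i - 1) ++ [a]) (wpow [a, b] i ++ [a]) := by
  intro i hi1 hih
  obtain ⟨i', rfl⟩ : ∃ i', i = i' + 1 := ⟨i - 1, by omega⟩
  simp only [Nat.add_sub_cancel]
  set w := wpow [a,b] i' with hw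
  have hcons : wpow [a,b] (i'+1) = a :: (b :: w) := by rw [wpow_succ]; simp [hw]
  have hcons2 : wpow [a,b] (i'+1) ++ [a] = a :: (b :: w ++ [a]) := by rw [hcons]; simp
  have Hocc : ∀ r, ∀ q ∈ lowDict a b h, ∀ u v, q = u ++ (b :: r) ++ v →
      ∃ u', u = u' ++ [a] := by
    intro r q hq u v hquv
    simp only [lowDict, Finset.mem_image, Finset.mem_product, Finset.mem_filter,
      Finset.mem_Icc, Finset.mem_range, Finset.mem_univ, true_and] at hq
    obtain ⟨⟨k, j, c⟩, ⟨⟨hk1, hk2⟩, hj, hca, hcb⟩, rfl⟩ := hq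
    dsimp only at hj hca hcb hquv
    exact KL a b hab k j c r u v (by omega) hca hcb hquv
  obtain ⟨d, hd⟩ : ∃ d, h - 1 = i' + d := ⟨h - 1 - i', by omega⟩
  have hp : wpow [b,a] h = (b :: w) ++ (wpow [a,b] d ++ [a]) := by
    obtain ⟨h', rfl⟩ : ∃ h', h = h' + 1 := ⟨h - 1, by omega⟩
    have hh' : h' = i' + d := by omega
    rw [wpow_ba, hh', wpow_add, hw]
    simp [List.append_assoc]
  refine ⟨?_, ?_, ?_, ?_⟩
  · rw [hcons]
    exact eqv_cons a _ _ (Hocc w)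
  · rw [hcons2]
    exact eqv_cons a _ _ (Hocc (w ++ [a]))
  · intro hE
    rw [hcons] at hE
    unfold eqv at hE
    have hmem : (wpow [b,a] h, (b :: w).length) ∈
        ePos (insert (wpow [b,a] h) (lowDict a b h)) (b :: w) := by
      refine ⟨Finset.mem_insert_self _ _, le_refl _, ?_, ?_⟩
      · rw [hp, List.length_append]; omega
      · rw [Nat.sub_self, List.drop_zero, hp, List.take_left]
    rw [hE] at hmem
    obtain ⟨-, h1, -, -⟩ := hmem
    simp only [List.length_cons] at h1
    omega
  · intro hE
    rw [hcons2] at hE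
    unfold eqv at hE
    obtain ⟨w2, hw2⟩ := wpow_a_cons a b d
    have hp2 : wpow [b,a] h = (b :: w ++ [a]) ++ w2 := by
      rw [hp, hw2]; simp
    have hmem : (wpow [b,a] h, (b :: w ++ [a]).length) ∈
        ePos (insert (wpow [b,a] h) (lowDict a b h)) (b :: w ++ [a]) := by
      refine ⟨Finset.mem_insert_self _ _, le_refl _, ?_, ?_⟩
      · dsimp only; rw [hp2]; simp only [List.length_append]; omega
      · dsimp only; rw [Nat.sub_self, List.drop_zero, hp2, List.take_left]
    rw [hE] at hmem
    obtain ⟨-, h1, -, -⟩ := hmem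
    simp only [List.length_cons, List.length_append, List.length_singleton] at h1
    omega

/-- With `|Σ| ≥ 3`, `a ≠ b`, `h ≥ 1`,
`D = { (ab)^i a^j c : 1 ≤ i ≤ h, j ∈ {0,1}, c ∈ Σ \ {a,b} }` and `p = (ba)^h`:
for every `1 ≤ i ≤ h`, `b(ab)^{i-1} ≡_D (ab)^i` and `b(ab)^{i-1}a ≡_D (ab)^i a`,
whereas `b(ab)^{i-1} ≢_{D∪{p}} (ab)^i` and `b(ab)^{i-1}a ≢_{D∪{p}} (ab)^i a`. -/
theorem stmt11 [Fintype α] [DecidableEq α] (hcard : 3 ≤ Fintype.card α)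
    (a b : α) (hab : a ≠ b) (h : ℕ) (hh : 1 ≤ h) :
    ∀ i, 1 ≤ i → i ≤ h →
      eqv (lowDict a b h) (b :: wpow [a, b] (i - 1)) (wpow [a, b] i) ∧
      eqv (lowDict a b h) (b :: wpow [a, b] (i - 1) ++ [a]) (wpow [a, b] i ++ [a]) ∧
      ¬ eqv (insert (wpow [b, a] h) (lowDict a b h))
          (b :: wpow [a, b] (i - 1)) (wpow [a, b] i) ∧
      ¬ eqv (insert (wpow [b, a] h) (lowDict a b h))
          (b :: wpow [a, b] (i - 1) ++ [a]) (wpow [a, b] i ++ [a]) := by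
  exact stmt11_aux hcard a b hab h hh
end

section
/- Let k ≥ 1 and x ≥ 1, and let a, c_1, …, c_x ∈ Σ be pairwise distinct symbols. For 0 ≤ j ≤ k define the dictionary D_j = { c_i a^k : 1 ≤ i ≤ x } ∪ { a^t : 1 ≤ t ≤ j }. Then for every j with 1 ≤ j ≤ k, the set { s ∈ Pref(D_{j−1}) : s ≠ ε and flink_{D_{j−1}}(s) ≠ flink_{D_j}(s) } has cardinality exactly x·(k−j+1); consequently, the total number of failure-link changes over the insertions of a^1, a^2, …, a^k is x·k·(k+1)/2. -/
variable {α : Type*}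

/-- The dictionary `D_j = { c_i a^k : 1 ≤ i ≤ x } ∪ { a^t : 1 ≤ t ≤ j }`. -/
def acDict [DecidableEq α] (k x : ℕ) (a : α) (c : Fin x → α) (j : ℕ) :
    Finset (List α) :=
  (Finset.univ.image fun i : Fin x => c i :: List.replicate k a) ∪
    ((Finset.Icc 1 j).image fun t => List.replicate t a)

set_option linter.unusedSectionVars false

section AuxLemmas

variable [DecidableEq α] {k x : ℕ} {a : α} {c : Fin x → α}

lemma repl_prefix_repl {m t : ℕ} : List.replicate m a <+: List.replicate t a ↔ m ≤ t := by
  constructor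
  · intro h; simpa using h.length_le
  · intro h
    exact ⟨List.replicate (t - m) a, by rw [← List.replicate_add]; congr 1; omega⟩

lemma prefix_of_replicate {w : List α} {t : ℕ} (h : w <+: List.replicate t a) :
    w = List.replicate w.length a ∧ w.length ≤ t := by
  refine ⟨List.eq_replicate_length.2 fun b hb => ?_, by simpa using h.length_le⟩
  exact List.eq_of_mem_replicate (h.subset hb)

lemma mem_Pref_acDict (hx : 0 < x) {j : ℕ} {s : List α} :
    s ∈ Pref (acDict k x a c j) ↔
      s = [] ∨ (∃ i, ∃ t ≤ k, s = c i :: List.replicate t a) ∨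
        (∃ t, 1 ≤ t ∧ t ≤ j ∧ s = List.replicate t a) := by
  constructor
  · rintro ⟨p, hp, hpre⟩
    rw [acDict] at hp
    simp only [Finset.mem_union, Finset.mem_image, Finset.mem_univ, true_and,
      Finset.mem_Icc] at hp
    rcases hp with ⟨i, rfl⟩ | ⟨t, ⟨ht1, ht2⟩, rfl⟩
    · rcases s with _ | ⟨b, w⟩
      · exact Or.inl rfl
      · rcases List.cons_prefix_cons.1 hpre with ⟨rfl, hw⟩
        obtain ⟨hw1, hw2⟩ := prefix_of_replicate hw
        exact Or.inr (Or.inl ⟨i, w.length, hw2, by rw [← hw1]⟩)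
    · obtain ⟨h1, h2⟩ := prefix_of_replicate hpre
      rcases Nat.eq_zero_or_pos s.length with h0 | h0
      · exact Or.inl (List.length_eq_zero_iff.1 h0)
      · exact Or.inr (Or.inr ⟨s.length, h0, le_trans h2 ht2, h1⟩)
  · rintro (rfl | ⟨i, t, ht, rfl⟩ | ⟨t, ht1, ht2, rfl⟩)
    · refine ⟨c ⟨0, hx⟩ :: List.replicate k a, ?_, List.nil_prefix⟩
      rw [acDict]
      simp
    · refine ⟨c i :: List.replicate k a, ?_, ?_⟩
      · rw [acDict]; simp
      · exact List.cons_prefix_cons.2 ⟨rfl, repl_prefix_repl.2 ht⟩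
    · refine ⟨List.replicate t a, ?_, List.prefix_refl _⟩
      rw [acDict]
      simp only [Finset.mem_union, Finset.mem_image, Finset.mem_univ, true_and,
        Finset.mem_Icc]
      exact Or.inr ⟨t, ⟨ht1, ht2⟩, rfl⟩

lemma repl_mem_Pref (hx : 0 < x) (hca : ∀ i, c i ≠ a) {j m : ℕ} :
    List.replicate m a ∈ Pref (acDict k x a c j) ↔ m = 0 ∨ m ≤ j := by
  rw [mem_Pref_acDict hx]
  constructor
  · rintro (h | ⟨i, t, ht, h⟩ | ⟨t, ht1, ht2, h⟩)
    · left; simpa using congrArg List.length h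
    · exfalso
      rcases m with _ | m
      · simp at h
      · rw [List.replicate_succ] at h
        exact hca i (List.head_eq_of_cons_eq h.symm)
    · right
      have := congrArg List.length h
      simp at this
      omega
  · rintro (rfl | h)
    · exact Or.inl rfl
    · rcases Nat.eq_zero_or_pos m with rfl | hm
      · exact Or.inl rfl
      · exact Or.inr (Or.inr ⟨m, hm, h, rfl⟩)

/-- auxiliary: the flink value computed from the full tails list. -/
noncomputable def fAux (D : Finset (List α)) (l : List α) : List α :=
  letI := Classical.propDecidable
  (l.tails.filter (fun y => decide (y ∈ Pref D))).headI

lemma flink_cons (D : Finset (List α)) (b : α) (w : List α) :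
    flink D (b :: w) = fAux D w := by
  simp only [flink, fAux, List.tails_cons, List.drop_succ_cons, List.drop_zero]

lemma fAux_repl (hx : 0 < x) (hca : ∀ i, c i ≠ a) (j : ℕ) :
    ∀ t, fAux (acDict k x a c j) (List.replicate t a) = List.replicate (min t j) a := by
  intro t
  induction t with
  | zero =>
    have h0 : ([] : List α) ∈ Pref (acDict k x a c j) := (mem_Pref_acDict hx).2 (Or.inl rfl)
    simp [fAux, h0]
  | succ t ih =>
    rcases le_or_gt (t + 1) j with hle | hlt
    · have hmem : List.replicate (t + 1) a ∈ Pref (acDict k x a c j) :=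
        (repl_mem_Pref hx hca).2 (Or.inr hle)
      rw [List.replicate_succ] at hmem ⊢
      simp only [fAux, List.tails_cons, List.filter_cons]
      rw [if_pos (@decide_eq_true _ (Classical.propDecidable _) hmem)]
      rw [List.headI_cons, Nat.min_eq_left hle, List.replicate_succ]
    · have hmem : List.replicate (t + 1) a ∉ Pref (acDict k x a c j) := by
        rw [repl_mem_Pref hx hca]; omega
      rw [List.replicate_succ] at hmem
      simp only [fAux, List.replicate_succ, List.tails_cons, List.filter_cons]
      rw [if_neg (by simpa using hmem)]
      have : min (t + 1) j = min t j := by omega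
      rw [this, ← ih]
      rfl

lemma flink_cons_repl (hx : 0 < x) (hca : ∀ i, c i ≠ a) (i : Fin x) (t j : ℕ) :
    flink (acDict k x a c j) (c i :: List.replicate t a) = List.replicate (min t j) a := by
  rw [flink_cons]; exact fAux_repl hx hca j t

lemma flink_repl (hx : 0 < x) (hca : ∀ i, c i ≠ a) {t : ℕ} (ht : 1 ≤ t) (j : ℕ) :
    flink (acDict k x a c j) (List.replicate t a) = List.replicate (min (t - 1) j) a := by
  obtain ⟨t, rfl⟩ : ∃ t', t = t' + 1 := ⟨t - 1, by omega⟩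
  rw [List.replicate_succ, flink_cons, fAux_repl hx hca]
  norm_num

end AuxLemmas

/-- With pairwise distinct symbols `a, c_1, …, c_x` and
`D_j = { c_i a^k : 1 ≤ i ≤ x } ∪ { a^t : 1 ≤ t ≤ j }`: for every `1 ≤ j ≤ k`,
the set of nonempty `s ∈ Pref (D_{j-1})` with `flink_{D_{j-1}}(s) ≠ flink_{D_j}(s)`
has cardinality exactly `x·(k-j+1)`; consequently the total number of failure-link
changes over the insertions of `a^1, …, a^k` is `x·k·(k+1)/2`. -/
theorem stmt13 [Fintype α] [DecidableEq α] (k x : ℕ) (hk : 1 ≤ k) (hx : 1 ≤ x)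
    (a : α) (c : Fin x → α) (hinj : Function.Injective c) (hca : ∀ i, c i ≠ a) :
    (∀ j, 1 ≤ j → j ≤ k →
      {s | s ∈ Pref (acDict k x a c (j - 1)) ∧ s ≠ [] ∧
          flink (acDict k x a c (j - 1)) s ≠ flink (acDict k x a c j) s}.ncard
        = x * (k - j + 1)) ∧
    (∑ j ∈ Finset.Icc 1 k,
      {s | s ∈ Pref (acDict k x a c (j - 1)) ∧ s ≠ [] ∧
          flink (acDict k x a c (j - 1)) s ≠ flink (acDict k x a c j) s}.ncard)
      = x * k * (k + 1) / 2 := by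
  have hx' : 0 < x := hx
  have hcard : ∀ j, 1 ≤ j → j ≤ k →
      {s | s ∈ Pref (acDict k x a c (j - 1)) ∧ s ≠ [] ∧
          flink (acDict k x a c (j - 1)) s ≠ flink (acDict k x a c j) s}.ncard
        = x * (k - j + 1) := by
    intro j hj1 hjk
    have hset : {s | s ∈ Pref (acDict k x a c (j - 1)) ∧ s ≠ [] ∧
          flink (acDict k x a c (j - 1)) s ≠ flink (acDict k x a c j) s}
        = ↑(((Finset.univ : Finset (Fin x)) ×ˢ Finset.Icc j k).image
            (fun p => c p.1 :: List.replicate p.2 a)) := by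
      ext s
      simp only [Set.mem_setOf_eq, Finset.coe_image, Set.mem_image, Finset.mem_coe,
        Finset.mem_product, Finset.mem_univ, true_and, Finset.mem_Icc, Prod.exists]
      constructor
      · rintro ⟨hsP, hne, hfl⟩
        rw [mem_Pref_acDict hx'] at hsP
        rcases hsP with rfl | ⟨i, t, ht, rfl⟩ | ⟨t, ht1, ht2, rfl⟩
        · exact absurd rfl hne
        · refine ⟨i, t, ⟨?_, ht⟩, rfl⟩
          by_contra hlt
          push_neg at hlt
          apply hfl
          rw [flink_cons_repl hx' hca, flink_cons_repl hx' hca]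
          congr 1
          omega
        · exfalso
          apply hfl
          rw [flink_repl hx' hca ht1, flink_repl hx' hca ht1]
          congr 1
          omega
      · rintro ⟨i, t, ⟨hjt, htk⟩, rfl⟩
        refine ⟨(mem_Pref_acDict hx').2 (Or.inr (Or.inl ⟨i, t, htk, rfl⟩)), by simp, ?_⟩
        rw [flink_cons_repl hx' hca, flink_cons_repl hx' hca]
        intro h
        have := congrArg List.length h
        simp only [List.length_replicate] at this
        omega
    have hinj2 : Function.Injective (fun p : Fin x × ℕ => c p.1 :: List.replicate p.2 a) := by
      rintro ⟨i1, t1⟩ ⟨i2, t2⟩ h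
      simp only [List.cons.injEq] at h
      obtain ⟨h1, h2⟩ := h
      have h3 := congrArg List.length h2
      simp only [List.length_replicate] at h3
      exact Prod.ext (hinj h1) h3
    rw [hset, Set.ncard_coe_finset, Finset.card_image_of_injective _ hinj2,
      Finset.card_product, Finset.card_univ, Fintype.card_fin, Nat.card_Icc]
    congr 1
    omega
  refine ⟨hcard, ?_⟩
  have key : ∑ j ∈ Finset.Icc 1 k, (k - j + 1) = ∑ j ∈ Finset.Icc 1 k, j := by
    apply Finset.sum_nbij' (fun j => k + 1 - j) (fun j => k + 1 - j) <;> intros <;>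
      simp_all [Finset.mem_Icc] <;> omega
  have gauss : (∑ j ∈ Finset.Icc 1 k, j) * 2 = k * (k + 1) := by
    clear hcard key hk
    induction k with
    | zero => simp
    | succ n ih =>
      rw [Finset.sum_Icc_succ_top (by omega)]
      ring_nf
      ring_nf at ih
      omega
  trans ∑ j ∈ Finset.Icc 1 k, x * (k - j + 1)
  · refine Finset.sum_congr rfl fun j hj => ?_
    rw [Finset.mem_Icc] at hj
    exact hcard j hj.1 hj.2
  · rw [← Finset.mul_sum, key, mul_assoc, ← gauss, ← mul_assoc,
      Nat.mul_div_cancel _ (by norm_num)]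
end

section
/- Let k ≥ 1 and x ≥ 1, and let a, c_1, …, c_x ∈ Σ be pairwise distinct symbols. For 0 ≤ j ≤ k define the dictionary D_j = { c_i a^k : 1 ≤ i ≤ x } ∪ { a^t : 1 ≤ t ≤ j }. Then for every j with 1 ≤ j ≤ k, the set { s ∈ Pref(D_{j−1}) : s ≠ ε and out_{D_{j−1}}(s) ≠ out_{D_j}(s) } has cardinality exactly x·(k−j+1); consequently, the total number of output-function changes over the insertions of a^1, a^2, …, a^k is x·k·(k+1)/2. -/
variable {α : Type*}

/-- Output function of the AC automaton: patterns of `D` that are suffixes of `s`. -/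
def outF (D : Finset (List α)) (s : List α) : Set (List α) :=
  {q | q ∈ D ∧ q <:+ s}

lemma repl_pre_repl {a : α} {m n : ℕ} :
    List.replicate m a <+: List.replicate n a ↔ m ≤ n := by
  constructor
  · intro h; simpa using h.length_le
  · intro h; refine ⟨List.replicate (n - m) a, ?_⟩
    rw [← List.replicate_add]; congr 1; omega

lemma repl_suf_repl {a : α} {m n : ℕ} :
    List.replicate m a <:+ List.replicate n a ↔ m ≤ n := by
  constructor
  · intro h; simpa using h.length_le
  · intro h; refine ⟨List.replicate (n - m) a, ?_⟩
    rw [← List.replicate_add]; congr 1; omega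

lemma pre_repl {a : α} {s : List α} {n : ℕ} (h : s <+: List.replicate n a) :
    ∃ m ≤ n, s = List.replicate m a := by
  refine ⟨s.length, by simpa using h.length_le, ?_⟩
  exact List.eq_replicate_length.2 fun b hb => List.eq_of_mem_replicate (h.sublist.mem hb)

lemma mem_acDict [DecidableEq α] {k x : ℕ} {a : α} {c : Fin x → α} {j : ℕ}
    {q : List α} : q ∈ acDict k x a c j ↔
      (∃ i, q = c i :: List.replicate k a) ∨
      (∃ t, 1 ≤ t ∧ t ≤ j ∧ q = List.replicate t a) := by
  simp [acDict, eq_comm, and_assoc]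

lemma repl_not_mem [DecidableEq α] {k x : ℕ} (a : α) (c : Fin x → α)
    (hca : ∀ i, c i ≠ a) {j : ℕ} (hj : 1 ≤ j) :
    List.replicate j a ∉ acDict k x a c (j - 1) := by
  rw [mem_acDict]
  rintro (⟨i, hi⟩ | ⟨t, ht1, ht2, ht⟩)
  · obtain ⟨j', rfl⟩ : ∃ j', j = j' + 1 := ⟨j - 1, by omega⟩
    rw [List.replicate_succ] at hi
    exact hca i (by injection hi with h _; exact h.symm)
  · have := congrArg List.length ht
    simp at this; omega

lemma acDict_succ [DecidableEq α] {k x : ℕ} (a : α) (c : Fin x → α)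
    {j : ℕ} (hj : 1 ≤ j) :
    acDict k x a c j = insert (List.replicate j a) (acDict k x a c (j - 1)) := by
  have : Finset.Icc 1 j = insert j (Finset.Icc 1 (j - 1)) := by
    ext t; simp [Finset.mem_Icc]; omega
  rw [acDict, acDict, this, Finset.image_insert, Finset.union_insert]

lemma outF_ne_iff [DecidableEq α] {k x : ℕ} (a : α) (c : Fin x → α)
    (hca : ∀ i, c i ≠ a) {j : ℕ} (hj : 1 ≤ j) (s : List α) :
    outF (acDict k x a c (j - 1)) s ≠ outF (acDict k x a c j) s ↔
      List.replicate j a <:+ s := by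
  have hD := acDict_succ (k := k) (x := x) a c hj
  have hv := repl_not_mem (k := k) a c hca hj
  constructor
  · intro hne
    by_contra h
    apply hne
    ext q
    simp only [outF, Set.mem_setOf_eq, hD, Finset.mem_insert]
    constructor
    · rintro ⟨hq, hs⟩; exact ⟨Or.inr hq, hs⟩
    · rintro ⟨hq | hq, hs⟩
      · exact absurd (hq ▸ hs) h
      · exact ⟨hq, hs⟩
  · intro hsuf heq
    have h1 : List.replicate j a ∈ outF (acDict k x a c j) s :=
      ⟨by rw [hD]; exact Finset.mem_insert_self _ _, hsuf⟩
    rw [← heq] at h1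
    exact hv h1.1

lemma gauss2 : ∀ k : ℕ, (∑ j ∈ Finset.Icc 1 k, (k - j + 1)) * 2 = k * (k + 1) := by
  intro k
  induction k with
  | zero => simp
  | succ k ih =>
    have hins : Finset.Icc 1 (k + 1) = insert (k + 1) (Finset.Icc 1 k) := by
      ext t; simp [Finset.mem_Icc]; omega
    rw [hins, Finset.sum_insert (by simp)]
    have : ∑ j ∈ Finset.Icc 1 k, (k + 1 - j + 1) =
        (∑ j ∈ Finset.Icc 1 k, (k - j + 1)) + ∑ j ∈ Finset.Icc 1 k, 1 := by
      rw [← Finset.sum_add_distrib]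
      apply Finset.sum_congr rfl
      intro j hj; simp [Finset.mem_Icc] at hj; omega
    rw [this]
    simp only [Finset.sum_const, smul_eq_mul, mul_one, Nat.card_Icc]
    have hr : (k + 1) * (k + 1 + 1) = k * (k + 1) + 2 * (k + 1) := by ring
    omega

/-- With pairwise distinct symbols `a, c_1, …, c_x` and
`D_j = { c_i a^k : 1 ≤ i ≤ x } ∪ { a^t : 1 ≤ t ≤ j }`: for every `1 ≤ j ≤ k`,
the set of nonempty `s ∈ Pref (D_{j-1})` with `out_{D_{j-1}}(s) ≠ out_{D_j}(s)`
has cardinality exactly `x·(k-j+1)`; consequently the total number of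
output-function changes over the insertions of `a^1, …, a^k` is `x·k·(k+1)/2`. -/
theorem stmt14 [Fintype α] [DecidableEq α] (k x : ℕ) (hk : 1 ≤ k) (hx : 1 ≤ x)
    (a : α) (c : Fin x → α) (hinj : Function.Injective c) (hca : ∀ i, c i ≠ a) :
    (∀ j, 1 ≤ j → j ≤ k →
      {s | s ∈ Pref (acDict k x a c (j - 1)) ∧ s ≠ [] ∧
          outF (acDict k x a c (j - 1)) s ≠ outF (acDict k x a c j) s}.ncard
        = x * (k - j + 1)) ∧
    (∑ j ∈ Finset.Icc 1 k,
      {s | s ∈ Pref (acDict k x a c (j - 1)) ∧ s ≠ [] ∧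
          outF (acDict k x a c (j - 1)) s ≠ outF (acDict k x a c j) s}.ncard)
      = x * k * (k + 1) / 2 := by
  have main : ∀ j, 1 ≤ j → j ≤ k →
      {s | s ∈ Pref (acDict k x a c (j - 1)) ∧ s ≠ [] ∧
          outF (acDict k x a c (j - 1)) s ≠ outF (acDict k x a c j) s}.ncard
        = x * (k - j + 1) := by
    intro j hj1 hjk
    have hset : {s | s ∈ Pref (acDict k x a c (j - 1)) ∧ s ≠ [] ∧
          outF (acDict k x a c (j - 1)) s ≠ outF (acDict k x a c j) s} =
        ↑((Finset.univ ×ˢ Finset.Icc j k).image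
          fun p : Fin x × ℕ => c p.1 :: List.replicate p.2 a) := by
      ext s
      simp only [Set.mem_setOf_eq, Finset.coe_image, Set.mem_image, Finset.mem_coe,
        Finset.mem_product, Finset.mem_Icc, Finset.mem_univ, true_and, Prod.exists]
      rw [outF_ne_iff a c hca hj1]
      constructor
      · rintro ⟨⟨p, hp, hpre⟩, hne, hsuf⟩
        rw [mem_acDict] at hp
        rcases hp with ⟨i, rfl⟩ | ⟨t, ht1, ht2, rfl⟩
        · -- s <+: c i :: replicate k a
          obtain ⟨u, hu⟩ := hpre
          cases s with
          | nil => exact absurd rfl hne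
          | cons b s' =>
            rw [List.cons_append] at hu
            injection hu with hb hs'
            obtain ⟨m, hm, rfl⟩ := pre_repl ⟨u, hs'⟩
            -- suffix: replicate j a <:+ b :: replicate m a
            rcases List.suffix_cons_iff.1 hsuf with h | h
            · obtain ⟨j', rfl⟩ : ∃ j', j = j' + 1 := ⟨j - 1, by omega⟩
              rw [List.replicate_succ] at h
              injection h with h1 _
              exact absurd (hb ▸ h1.symm) (hca i)
            · have hjm := repl_suf_repl.1 h
              exact ⟨i, m, ⟨hjm, hm⟩, by rw [hb]⟩
        · -- s <+: replicate t a, t ≤ j - 1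
          obtain ⟨m, hm, rfl⟩ := pre_repl hpre
          have := repl_suf_repl.1 hsuf
          omega
      · rintro ⟨i, m, ⟨hjm, hmk⟩, rfl⟩
        refine ⟨⟨c i :: List.replicate k a, ?_, ?_⟩, by simp, ?_⟩
        · exact mem_acDict.2 (Or.inl ⟨i, rfl⟩)
        · exact ⟨List.replicate (k - m) a, by
            rw [List.cons_append, ← List.replicate_add]; congr 2; omega⟩
        · exact List.suffix_cons_iff.2 (Or.inr (repl_suf_repl.2 hjm))
    rw [hset, Set.ncard_coe_finset, Finset.card_image_of_injOn, Finset.card_product,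
      Finset.card_univ, Fintype.card_fin, Nat.card_Icc]
    · congr 1; omega
    · rintro ⟨i1, m1⟩ h1 ⟨i2, m2⟩ h2 h
      injection h with hc hr
      have hm : m1 = m2 := by
        have := congrArg List.length hr; simpa using this
      exact Prod.ext (hinj hc) hm
  refine ⟨main, ?_⟩
  rw [Finset.sum_congr rfl fun j hj => main j (Finset.mem_Icc.1 hj).1 (Finset.mem_Icc.1 hj).2]
  rw [← Finset.mul_sum]
  have h2 := gauss2 k
  have hdvd : 2 ∣ k * (k + 1) := (Nat.even_mul_succ_self k).two_dvd
  have : ∑ j ∈ Finset.Icc 1 k, (k - j + 1) = k * (k + 1) / 2 := by omega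
  rw [this, mul_assoc]
  exact (Nat.mul_div_assoc x hdvd).symm
end

section
/- Let p_1, …, p_k be nonempty strings over Σ, let D_j = {p_1, …, p_j} for 1 ≤ j ≤ k, and let d = |p_1| + ⋯ + |p_k|. Then the total number of failure-link changes over the whole insertion sequence, namely Σ_{j=1}^{k−1} |{ s ∈ Pref(D_j) : s ≠ ε and flink_{D_j}(s) ≠ flink_{D_{j+1}}(s) }|, is at most k·d; the same bound k·d holds with the output function out in place of flink. (Hence the total number of AC-automaton updates over k insertions is O(k·d).) -/
variable {α : Type*}

lemma pref_ncard_le [DecidableEq α] (j : ℕ) (p : ℕ → List α) (T : Set (List α))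
    (hT : ∀ s ∈ T, s ∈ Pref ((Finset.Icc 1 j).image p) ∧ s ≠ []) :
    T.ncard ≤ ∑ i ∈ Finset.Icc 1 j, (p i).length := by
  classical
  set F : Finset (List α) :=
    (Finset.Icc 1 j).biUnion
      (fun i => (Finset.Icc 1 (p i).length).image (fun m => (p i).take m)) with hF
  have hsub : T ⊆ ↑F := by
    intro s hs
    obtain ⟨⟨q, hq, hpre⟩, hne⟩ := hT s hs
    obtain ⟨i, hi, rfl⟩ := Finset.mem_image.mp hq
    simp only [hF, Finset.coe_biUnion, Set.mem_iUnion, Finset.mem_coe,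
      Finset.mem_image, Finset.mem_Icc]
    refine ⟨i, Finset.mem_Icc.mp hi, s.length, ⟨?_, hpre.length_le⟩, ?_⟩
    · exact Nat.one_le_iff_ne_zero.mpr (by simpa using hne)
    · exact (List.prefix_iff_eq_take.mp hpre).symm
  have h1 : T.ncard ≤ F.card := by
    have := Set.ncard_le_ncard hsub F.finite_toSet
    simpa [Set.ncard_coe_finset] using this
  refine h1.trans ?_
  refine (Finset.card_biUnion_le).trans (Finset.sum_le_sum ?_)
  intro i _
  exact (Finset.card_image_le).trans (by simp)

/-- Let `p_1, …, p_k` be nonempty strings, `D_j = {p_1, …, p_j}`,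
and `d = |p_1| + ⋯ + |p_k|`. Then the total number of failure-link changes over the
insertion sequence, `Σ_{j=1}^{k-1} |{ s ∈ Pref D_j : s ≠ ε ∧ flink_{D_j}(s) ≠
flink_{D_{j+1}}(s) }|`, is at most `k·d`; the same bound holds with `out` in place
of `flink`. -/
theorem stmt15 [Fintype α] [DecidableEq α] (k : ℕ) (hk : 1 ≤ k)
    (p : ℕ → List α) (hp : ∀ i, 1 ≤ i → i ≤ k → p i ≠ []) :
    (∑ j ∈ Finset.Ico 1 k,
      {s | s ∈ Pref ((Finset.Icc 1 j).image p) ∧ s ≠ [] ∧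
          flink ((Finset.Icc 1 j).image p) s ≠
            flink ((Finset.Icc 1 (j + 1)).image p) s}.ncard)
      ≤ k * (∑ i ∈ Finset.Icc 1 k, (p i).length) ∧
    (∑ j ∈ Finset.Ico 1 k,
      {s | s ∈ Pref ((Finset.Icc 1 j).image p) ∧ s ≠ [] ∧
          outF ((Finset.Icc 1 j).image p) s ≠
            outF ((Finset.Icc 1 (j + 1)).image p) s}.ncard)
      ≤ k * (∑ i ∈ Finset.Icc 1 k, (p i).length) := by
  classical
  set d := ∑ i ∈ Finset.Icc 1 k, (p i).length with hd
  have key : ∀ (T : ℕ → Set (List α)),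
      (∀ j, ∀ s ∈ T j, s ∈ Pref ((Finset.Icc 1 j).image p) ∧ s ≠ []) →
      (∑ j ∈ Finset.Ico 1 k, (T j).ncard) ≤ k * d := by
    intro T hT
    have h1 : ∀ j ∈ Finset.Ico 1 k, (T j).ncard ≤ d := by
      intro j hj
      refine (pref_ncard_le j p (T j) (hT j)).trans ?_
      apply Finset.sum_le_sum_of_subset
      apply Finset.Icc_subset_Icc_right
      exact le_of_lt (Finset.mem_Ico.mp hj).2
    calc (∑ j ∈ Finset.Ico 1 k, (T j).ncard)
        ≤ ∑ _j ∈ Finset.Ico 1 k, d := Finset.sum_le_sum h1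
      _ = (k - 1) * d := by simp [Nat.card_Ico]
      _ ≤ k * d := Nat.mul_le_mul_right d (Nat.sub_le k 1)
  constructor
  · exact key _ (fun j s hs => ⟨hs.1, hs.2.1⟩)
  · exact key _ (fun j s hs => ⟨hs.1, hs.2.1⟩)
end
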